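/- Let V : ℝ → ℝ be continuous and satisfy lim_{x→±∞} V(x)/(|x|+1) = +∞. Then there exists a constant c_V ∈ ℝ such that for all t, s ∈ ℝ with t ≠ s, (1/2)log|t−s|^{−1} + (1/2)log|e^t−e^s|^{−1} + (1/2)V(t) + (1/2)V(s) ≥ c_V. -/

import Mathlib

open Filter

/-! Both logarithms are at most `|t| + |s|`, so the kernel is at least `½W(t) + ½W(s)` with
`W x = V x - 2|x|`. The growth condition makes `W` tend to `+∞` at `±∞`, so the continuous
function `W` attains a minimum, which is the required constant. -/

lemma Real.log_abs_sub_le_abs_add_abs (t s : ℝ) : Real.log |t - s| ≤ |t| + |s| :=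
  (Real.log_le_self (abs_nonneg _)).trans (abs_sub _ _)

lemma Real.log_abs_exp_sub_exp_le_abs_add_abs {t s : ℝ} (h : t ≠ s) :
    Real.log |Real.exp t - Real.exp s| ≤ |t| + |s| := by
  have hpos : 0 < |Real.exp t - Real.exp s| :=
    abs_pos.2 (sub_ne_zero.2 (Real.exp_injective.ne h))
  rw [Real.log_le_iff_le_exp hpos]
  exact abs_sub_le_of_nonneg_of_le (Real.exp_pos t).le
    (Real.exp_le_exp.2 (le_add_of_le_of_nonneg (le_abs_self t) (abs_nonneg s)))
    (Real.exp_pos s).le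
    (Real.exp_le_exp.2 (le_add_of_nonneg_of_le (abs_nonneg t) (le_abs_self s)))

lemma tendsto_sub_mul_abs_atTop_of_tendsto_div {V : ℝ → ℝ} {l : Filter ℝ} (c : ℝ)
    (h : Tendsto (fun x => V x / (|x| + 1)) l atTop) :
    Tendsto (fun x => V x - c * |x|) l atTop := by
  rw [tendsto_atTop]
  intro b
  filter_upwards [h.eventually_ge_atTop (c + |b| + |c|)] with x hx
  have hV : (c + |b| + |c|) * (|x| + 1) ≤ V x := (le_div_iff₀ (by positivity)).1 hx
  nlinarith [abs_nonneg x, abs_nonneg b, abs_nonneg c, le_abs_self b, neg_abs_le c]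

theorem kernel_bounded_below
    (V : ℝ → ℝ) (hcont : Continuous V)
    (hgrowth : Tendsto (fun x => V x / (|x| + 1)) atTop atTop ∧
      Tendsto (fun x => V x / (|x| + 1)) atBot atTop) :
    ∃ cV : ℝ, ∀ t s : ℝ, t ≠ s →
      cV ≤ 1/2 * (-Real.log |t - s|) + 1/2 * (-Real.log |Real.exp t - Real.exp s|)
        + 1/2 * V t + 1/2 * V s := by
  set W : ℝ → ℝ := fun x => V x - 2 * |x|
  have hW_tendsto : Tendsto W (cocompact ℝ) atTop := by
    rw [cocompact_eq_atBot_atTop, tendsto_sup]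
    exact ⟨tendsto_sub_mul_abs_atTop_of_tendsto_div 2 hgrowth.2,
      tendsto_sub_mul_abs_atTop_of_tendsto_div 2 hgrowth.1⟩
  have hW_continuous : Continuous W := hcont.sub (continuous_const.mul continuous_abs)
  obtain ⟨x₀, hx₀⟩ := hW_continuous.exists_forall_le hW_tendsto
  refine ⟨W x₀, fun t s hts => ?_⟩
  have ht : W x₀ ≤ V t - 2 * |t| := hx₀ t
  have hs : W x₀ ≤ V s - 2 * |s| := hx₀ s
  linarith [Real.log_abs_sub_le_abs_add_abs t s, Real.log_abs_exp_sub_exp_le_abs_add_abs hts]
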